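/- For any Artin algebra A, the syzygy of any finitely generated A-module lies in [A/rad(A)]_{ℓℓ(A)−1}; consequently Ω(A-mod) ⊆ [A/rad(A)]_{ℓℓ(A)−1}. -/

import Mathlib

/-! The kernel of a projective cover `P → M` is superfluous, hence contained in
`rad P = rad(A) • P`; as `rad(A)^ℓℓ = 0`, the syzygy is killed by `rad(A)^(ℓℓ-1)`.
A finitely generated module `N` killed by `rad(A)^(n+1)` is an extension of
`N / rad(A)^n N`, killed by `rad(A)^n`, by `rad(A)^n N`, which is killed by `rad A` and hence
semisimple over `A ⧸ rad A`, thus a summand of some `(A ⧸ rad A)^k`. Induction on `n`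
puts such `N` in `[A ⧸ rad A]_n`. -/

open CategoryTheory

universe u

namespace Paper

variable (A : Type u) [Ring A]

/-- A short exact sequence `0 → X → Y → Z → 0` of `A`-modules. -/
def SES (X Y Z : ModuleCat.{u} A) : Prop :=
  ∃ (f : X →ₗ[A] Y) (g : Y →ₗ[A] Z),
    Function.Injective f ∧ Function.Surjective g ∧ LinearMap.range f = LinearMap.ker g

/-- `M` is a direct summand of `X`. -/
def IsSummand (M X : ModuleCat.{u} A) : Prop :=
  ∃ (i : M →ₗ[A] X) (r : X →ₗ[A] M), r.comp i = LinearMap.id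

/-- The additive closure `add 𝒯`: direct summands of finite direct sums of objects of `𝒯`. -/
def addClosure (T : Set (ModuleCat.{u} A)) : Set (ModuleCat.{u} A) :=
  { M | ∃ (n : ℕ) (f : Fin n → ModuleCat.{u} A), (∀ j, f j ∈ T) ∧
      IsSummand A M (ModuleCat.of A (∀ j, (f j : Type u))) }

/-- The extension product `𝒞 • 𝒟`: (summands of) extensions of a module of `𝒟`
by a module of `𝒞`. -/
def bullet (C D : Set (ModuleCat.{u} A)) : Set (ModuleCat.{u} A) :=
  addClosure A { X | ∃ C' ∈ C, ∃ D' ∈ D, SES A C' X D' }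

/-- `[𝒯]ₙ`, defined by `[𝒯]₀ = {0}`, `[𝒯]₁ = add 𝒯` and `[𝒯]ₙ = [𝒯]₁ • [𝒯]ₙ₋₁`. -/
def bracket (T : Set (ModuleCat.{u} A)) : ℕ → Set (ModuleCat.{u} A)
  | 0 => { M | ∀ x : M, x = 0 }
  | 1 => addClosure A T
  | n + 2 => bullet A (addClosure A T) (bracket T (n + 1))

/-- The class `𝒯₁ ⊕ 𝒯₂ = {X ⊕ Y | X ∈ 𝒯₁, Y ∈ 𝒯₂}`. -/
def setSum (T1 T2 : Set (ModuleCat.{u} A)) : Set (ModuleCat.{u} A) :=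
  { M | ∃ X ∈ T1, ∃ Y ∈ T2, Nonempty ((M : Type u) ≃ₗ[A] (↥X × ↥Y)) }

/-- The extension dimension of a subcategory `𝒞` of `A`-mod:
the least `n` such that `𝒞 ⊆ [T]_{n+1}` for some finitely generated module `T`. -/
noncomputable def ed (C : Set (ModuleCat.{u} A)) : ℕ∞ :=
  sInf { n : ℕ∞ | ∃ m : ℕ, n = (m : ℕ∞) ∧
    ∃ T : ModuleCat.{u} A, Module.Finite A T ∧ C ⊆ bracket A {T} (m + 1) }

/-- The category `Ωⁿ(A-mod)` of `n`-th syzygy modules: finitely generated `K` admitting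
an exact sequence `0 → K → P⁰ → ⋯ → P^{n-1} → M → 0` with all `Pⁱ` projective,
encoded by a chain of short exact sequences. -/
def SyzCat (n : ℕ) : Set (ModuleCat.{u} A) :=
  { K | Module.Finite A K ∧
    ∃ (Ks : Fin (n + 1) → ModuleCat.{u} A) (P : Fin n → ModuleCat.{u} A),
      Ks 0 = K ∧ (∀ i, Module.Finite A (Ks i)) ∧
      (∀ i, Module.Finite A (P i) ∧ Module.Projective A (P i)) ∧
      ∀ i : Fin n, SES A (Ks i.castSucc) (P i) (Ks i.succ) }

/-- The category `Ω^∞(A-mod)` of infinite syzygy modules: finitely generated `K` admitting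
an exact sequence `0 → K → P⁰ → P¹ → ⋯` with all `Pⁱ` projective. -/
def InfSyzCat : Set (ModuleCat.{u} A) :=
  { K | Module.Finite A K ∧
    ∃ Ks P : ℕ → ModuleCat.{u} A,
      Ks 0 = K ∧ (∀ i, Module.Finite A (Ks i)) ∧
      (∀ i, Module.Finite A (P i) ∧ Module.Projective A (P i)) ∧
      ∀ i : ℕ, SES A (Ks i) (P i) (Ks (i + 1)) }

/-- A submodule is superfluous (small). -/
def Superfluous {M : ModuleCat.{u} A} (N : Submodule A M) : Prop :=
  ∀ N' : Submodule A M, N ⊔ N' = ⊤ → N' = ⊤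

/-- `K` is the (minimal) syzygy `Ω(M)`: the kernel of a projective cover `P → M`. -/
def IsSyzygyOf (K M : ModuleCat.{u} A) : Prop :=
  ∃ (P : ModuleCat.{u} A) (i : K →ₗ[A] P) (p : P →ₗ[A] M),
    Module.Projective A P ∧ Function.Injective i ∧ Function.Surjective p ∧
    LinearMap.range i = LinearMap.ker p ∧ Superfluous A (LinearMap.ker p)

/-- `K ≅ Ωⁿ(M)`. -/
def IsIterSyzygyOf : ℕ → ModuleCat.{u} A → ModuleCat.{u} A → Prop
  | 0, K, M => Nonempty ((K : Type u) ≃ₗ[A] M)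
  | n + 1, K, M => ∃ L, IsIterSyzygyOf n L M ∧ IsSyzygyOf A K L

/-- A submodule is essential. -/
def EssentialIn {M : ModuleCat.{u} A} (N : Submodule A M) : Prop :=
  ∀ N' : Submodule A M, N ⊓ N' = ⊥ → N' = ⊥

/-- `C` is the cosyzygy `Ω⁻¹(M)`: the cokernel of an injective envelope `M → I`. -/
def IsCosyzygyOf (C M : ModuleCat.{u} A) : Prop :=
  ∃ (I : ModuleCat.{u} A) (j : M →ₗ[A] I) (q : I →ₗ[A] C),
    Module.Injective A I ∧ Function.Injective j ∧ Function.Surjective q ∧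
    LinearMap.range j = LinearMap.ker q ∧ EssentialIn A (LinearMap.range j)

/-- `C ≅ Ω⁻ⁿ(M)`. -/
def IsIterCosyzygyOf : ℕ → ModuleCat.{u} A → ModuleCat.{u} A → Prop
  | 0, C, M => Nonempty ((C : Type u) ≃ₗ[A] M)
  | n + 1, C, M => ∃ L, IsIterCosyzygyOf n L M ∧ IsCosyzygyOf A C L

/-- The Loewy length of `A`: the least `n` with `rad(A)ⁿ = 0`, where `rad(A)` is the
Jacobson radical. -/
noncomputable def loewyLength (R : Type u) [CommRing R] [Algebra R A] : ℕ :=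
  sInf { n : ℕ | (Submodule.restrictScalars R ((⊥ : Ideal A).jacobson)) ^ n = ⊥ }

section

variable {A}

lemma mem_addClosure_of_mem {T : Set (ModuleCat.{u} A)} {N : ModuleCat.{u} A} (h : N ∈ T) :
    N ∈ addClosure A T :=
  ⟨1, fun _ => N, fun _ => h, LinearMap.pi fun _ => LinearMap.id, LinearMap.proj 0, rfl⟩

lemma ses_subtype_mkQ {N : ModuleCat.{u} A} (S : Submodule A N) :
    SES A (ModuleCat.of A S) N (ModuleCat.of A (N ⧸ S)) :=
  ⟨S.subtype, S.mkQ, S.injective_subtype, S.mkQ_surjective, by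
    rw [Submodule.range_subtype, Submodule.ker_mkQ]⟩

lemma Superfluous.le_jacobson {M : ModuleCat.{u} A} {N : Submodule A M}
    (hN : Superfluous A N) : N ≤ Module.jacobson A M :=
  le_sInf fun m hm => by
    by_contra hNm
    exact hm.1 (hN m (sup_comm m N ▸ hm.2 _ (left_lt_sup.2 hNm)))

lemma finite_of_superfluous_ker {P M : ModuleCat.{u} A} [Module.Finite A M] {p : P →ₗ[A] M}
    (hp : Function.Surjective p) (hker : Superfluous A (LinearMap.ker p)) :
    Module.Finite A P := by
  obtain ⟨k, x, hx⟩ := Module.Finite.exists_fin (R := A) (M := M)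
  choose y hy using fun j => hp (x j)
  have hmap : (Submodule.span A (Set.range y)).map p = LinearMap.range p := by
    rw [Submodule.map_span, ← Set.range_comp, show p ∘ y = x from funext hy, hx,
      LinearMap.range_eq_top.2 hp]
  have hspan := hker _ (Submodule.map_eq_range_iff.1 hmap).symm.eq_top
  exact ⟨hspan ▸ Submodule.fg_span (Set.finite_range y)⟩

lemma isSemisimpleModule_of_isTorsionBySet_jacobson [IsSemiprimaryRing A] {M : Type*}
    [AddCommGroup M] [Module A M] (h : Module.IsTorsionBySet A M (Ring.jacobson A)) :
    IsSemisimpleModule A M :=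
  letI := h.module
  h.isSemisimpleModule_iff.mp inferInstance

lemma jacobson_le_jacobson_smul_top [IsSemiprimaryRing A] (M : Type*)
    [AddCommGroup M] [Module A M] :
    Module.jacobson A M ≤ Ring.jacobson A • (⊤ : Submodule A M) := by
  have : IsSemisimpleModule A (M ⧸ Ring.jacobson A • (⊤ : Submodule A M)) :=
    isSemisimpleModule_of_isTorsionBySet_jacobson <| (Module.isTorsionBySet_quotient_iff _ _).2
      fun _ _ hr => Submodule.smul_mem_smul hr trivial
  exact Module.jacobson_le_of_eq_bot (IsSemisimpleModule.jacobson_eq_bot A _)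

lemma jacobson_pow_le_annihilator_of_isSyzygyOf [IsSemiprimaryRing A] {K M : ModuleCat.{u} A}
    (hK : IsSyzygyOf A K M) {n : ℕ} (hn : Ring.jacobson A ^ (n + 1) = ⊥) :
    Ring.jacobson A ^ n ≤ Module.annihilator A K := by
  obtain ⟨P, i, p, -, hi, -, hrange, hker⟩ := hK
  have hK_le : LinearMap.range i ≤ Ring.jacobson A • (⊤ : Submodule A P) :=
    hrange ▸ hker.le_jacobson.trans (jacobson_le_jacobson_smul_top P)
  intro a ha
  refine Module.mem_annihilator.2 fun x => hi ?_
  have hax : a • i x ∈ Ring.jacobson A ^ (n + 1) • (⊤ : Submodule A P) := by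
    rw [Submodule.pow_succ, Submodule.mul_smul]
    exact Submodule.smul_mem_smul ha (hK_le ⟨x, rfl⟩)
  rw [hn, Submodule.bot_smul, Submodule.mem_bot] at hax
  rw [map_smul, hax, map_zero]

lemma mem_addClosure_of_jacobson_le_annihilator [IsSemiprimaryRing A] (N : ModuleCat.{u} A)
    [Module.Finite A N] (h : Ring.jacobson A ≤ Module.annihilator A N) :
    N ∈ addClosure A {ModuleCat.of A (A ⧸ Ring.jacobson A)} := by
  have hN : Module.IsTorsionBySet A N (Ring.jacobson A) :=
    (Module.isTorsionBySet_iff_subset_annihilator A N).2 h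
  let _ := hN.module
  have := hN.isScalarTower (S := A)
  have : Module.Finite (A ⧸ Ring.jacobson A) N := Module.Finite.of_restrictScalars_finite A _ N
  obtain ⟨k, q, hq⟩ := Module.Finite.exists_fin' (A ⧸ Ring.jacobson A) N
  obtain ⟨s, hs⟩ := IsSemisimpleModule.lifting_property q hq LinearMap.id
  exact ⟨k, fun _ => ModuleCat.of A (A ⧸ Ring.jacobson A), fun _ => rfl,
    s.restrictScalars A, q.restrictScalars A, congrArg (LinearMap.restrictScalars A) hs⟩

lemma mem_bracket_of_jacobson_pow_le_annihilator [IsArtinianRing A] :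
    ∀ (n : ℕ) (N : ModuleCat.{u} A) [Module.Finite A N],
      Ring.jacobson A ^ n ≤ Module.annihilator A N →
      N ∈ bracket A {ModuleCat.of A (A ⧸ Ring.jacobson A)} n
  | 0, N, _, h => fun x => by
    rw [Submodule.pow_zero, Ideal.one_eq_top, top_le_iff, Module.annihilator_eq_top_iff] at h
    exact Subsingleton.elim x 0
  | 1, N, _, h =>
    mem_addClosure_of_jacobson_le_annihilator N (Submodule.pow_one (Ring.jacobson A) ▸ h)
  | n + 2, N, _, h => by
    let S : Submodule A N := Ring.jacobson A ^ (n + 1) • ⊤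
    have hS : Ring.jacobson A ≤ Module.annihilator A S := by
      rw [← Submodule.annihilator_top, Submodule.le_annihilator_iff] at h
      rw [Submodule.le_annihilator_iff, ← Submodule.mul_smul, ← Ideal.IsTwoSided.pow_succ]
      exact h
    have hQ : Ring.jacobson A ^ (n + 1) ≤ Module.annihilator A (N ⧸ S) := by
      rw [Submodule.annihilator_quotient]
      exact fun r hr => Submodule.mem_colon.2 fun x _ => Submodule.smul_mem_smul hr trivial
    exact mem_addClosure_of_mem ⟨ModuleCat.of A S, mem_addClosure_of_jacobson_le_annihilator _ hS,
      ModuleCat.of A (N ⧸ S), mem_bracket_of_jacobson_pow_le_annihilator (n + 1) _ hQ,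
      ses_subtype_mkQ S⟩

lemma jacobson_pow_loewyLength [IsArtinianRing A] (R : Type u) [CommRing R] [Algebra R A] :
    Ring.jacobson A ^ loewyLength A R = ⊥ := by
  obtain ⟨k, hk⟩ := IsArtinianRing.isNilpotent_jacobson_bot (R := A)
  have hk1 : Ring.jacobson A ^ (k + 1) = ⊥ := by
    rw [Submodule.pow_succ, ← Ideal.jacobson_bot, hk, zero_mul, Submodule.zero_eq_bot]
  have hmem : (Submodule.restrictScalars R (⊥ : Ideal A).jacobson) ^ loewyLength A R = ⊥ := by
    refine Nat.sInf_mem (s := {n | (Submodule.restrictScalars R (⊥ : Ideal A).jacobson) ^ n = ⊥})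
      ⟨k + 1, ?_⟩
    show _ = ⊥
    rw [← Submodule.restrictScalars_pow k.succ_ne_zero, Ideal.jacobson_bot,
      hk1, Submodule.restrictScalars_bot]
  rcases Nat.eq_zero_or_pos (loewyLength A R) with h0 | hpos
  · -- `rad(A)⁰ = A` vanishes only for the zero ring
    rw [h0, pow_zero, Submodule.one_eq_range, LinearMap.range_eq_bot] at hmem
    have : Subsingleton A := subsingleton_of_zero_eq_one (by simpa using congrArg (· 1) hmem.symm)
    exact Subsingleton.elim _ _
  · rwa [← Submodule.restrictScalars_pow hpos.ne', Submodule.restrictScalars_eq_bot_iff,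
      Ideal.jacobson_bot] at hmem

end

/-- over an Artin algebra `A`, the syzygy `Ω(M)` (kernel of a projective
cover) of any finitely generated `A`-module `M` lies in `[A/rad A]_{ℓℓ(A)-1}`;
consequently `Ω(A-mod) ⊆ [A/rad A]_{ℓℓ(A)-1}`. -/
theorem stmt8 (R : Type u) [CommRing R] [IsArtinianRing R]
    [Algebra R A] [Module.Finite R A]
    (M K : ModuleCat.{u} A) (hM : Module.Finite A M)
    (hK : IsSyzygyOf A K M) :
    K ∈ bracket A {ModuleCat.of A (A ⧸ (Submodule.restrictScalars A ((⊥ : Ideal A).jacobson)))}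
      (loewyLength A R - 1) := by
  have : IsArtinianRing A := IsArtinianRing.of_finite R A
  have : Module.Finite A K := by
    obtain ⟨P, i, p, -, hi, hp, -, hker⟩ := hK
    have := finite_of_superfluous_ker hp hker
    exact Module.Finite.of_injective i hi
  have hpow : Ring.jacobson A ^ (loewyLength A R - 1 + 1) = ⊥ :=
    le_bot_iff.1 <| (jacobson_pow_loewyLength R).le.trans' <|
      Ideal.pow_le_pow_right (by omega)
  rw [Submodule.restrictScalars_self, Ideal.jacobson_bot]
  exact mem_bracket_of_jacobson_pow_le_annihilator _ K
    (jacobson_pow_le_annihilator_of_isSyzygyOf hK hpow)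

end Paper
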